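/- For every triangle T in the plane (T = conv{a, b, c} with a, b, c affinely independent), there exists a family F of nine translates of T such that ν(F) = 1 (any two members of F intersect) and τ(F) = 3 (there is a set of three points meeting every member of F, but no set of two points meets every member of F). -/
import Mathlib


open Pointwise

set_option maxHeartbeats 4000000 in
/-- For every triangle `T` in the plane there is a family of nine translates of `T`
(given by nine distinct translation vectors) that is pairwise intersecting (so
`ν(F) = 1`), can be pierced by three points, but cannot be pierced by two points
(so `τ(F) = 3`). -/
theorem triangle_nine_translates_transversal_three
    (a b c : EuclideanSpace ℝ (Fin 2))
    (habc : AffineIndependent ℝ ![a, b, c])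
    (T : Set (EuclideanSpace ℝ (Fin 2)))
    (hT : T = convexHull ℝ {a, b, c}) :
    ∃ V : Finset (EuclideanSpace ℝ (Fin 2)),
      V.card = 9 ∧
      (∀ u ∈ V, ∀ w ∈ V, ((u +ᵥ T) ∩ (w +ᵥ T)).Nonempty) ∧
      (∃ P : Finset (EuclideanSpace ℝ (Fin 2)),
        P.card = 3 ∧ ∀ v ∈ V, ∃ x ∈ P, x ∈ v +ᵥ T) ∧
      (∀ P : Finset (EuclideanSpace ℝ (Fin 2)),
        P.card ≤ 2 → ∃ v ∈ V, ∀ x ∈ P, x ∉ v +ᵥ T) := by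
  classical
  obtain ⟨e1, he1⟩ : ∃ v : EuclideanSpace ℝ (Fin 2), v = b - a := ⟨_, rfl⟩
  obtain ⟨e2, he2⟩ : ∃ v : EuclideanSpace ℝ (Fin 2), v = c - a := ⟨_, rfl⟩
  -- linear independence of e1, e2
  have uniq0 : ∀ s t : ℝ, s • e1 + t • e2 = 0 → s = 0 ∧ t = 0 := by
    intro s t h
    rw [he1, he2] at h
    have key := affineIndependent_iff.1 habc Finset.univ ![-(s+t), s, t]
      (by simp [Fin.sum_univ_three])
      (by simp only [Fin.sum_univ_three, Matrix.cons_val_zero, Matrix.cons_val_one,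
            Matrix.head_cons, Matrix.cons_val_two, Matrix.tail_cons]
          rw [show (-(s+t)) • a + s • b + t • c = s • (b - a) + t • (c - a) by module, h])
    exact ⟨key 1 (Finset.mem_univ _), key 2 (Finset.mem_univ _)⟩
  -- injectivity of the parametrization, as iff lemmas for simp
  have vecEq : ∀ p q p' q' : ℝ, p • e1 + q • e2 = p' • e1 + q' • e2 ↔ (p = p' ∧ q = q') := by
    intro p q p' q'
    constructor
    · intro h
      have h0 : (p - p') • e1 + (q - q') • e2 = 0 := by
        rw [sub_smul, sub_smul]; rw [← sub_eq_zero] at h; rw [← h]; abel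
      obtain ⟨h1, h2⟩ := uniq0 _ _ h0
      constructor <;> linarith [sub_eq_zero.1 (h1), sub_eq_zero.1 (h2)]
    · rintro ⟨rfl, rfl⟩; rfl
  have ptEq : ∀ s t s' t' : ℝ,
      a + s • e1 + t • e2 = a + s' • e1 + t' • e2 ↔ (s = s' ∧ t = t') := by
    intro s t s' t'
    rw [← vecEq s t s' t']
    constructor
    · intro h
      have := congrArg (fun z => z - a) h
      simpa [add_assoc, add_sub_cancel_left] using this
    · intro h; rw [show a + s • e1 + t • e2 = a + (s • e1 + t • e2) by abel, h,
        show a + (s' • e1 + t' • e2) = a + s' • e1 + t' • e2 by abel]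
  -- characterization of T
  have memT : ∀ x : EuclideanSpace ℝ (Fin 2), x ∈ T ↔
      ∃ s t : ℝ, 0 ≤ s ∧ 0 ≤ t ∧ s + t ≤ 1 ∧ x = a + s • e1 + t • e2 := by
    intro x
    rw [hT]
    constructor
    · intro hx
      have hsub : convexHull ℝ (({a, b, c} : Set (EuclideanSpace ℝ (Fin 2)))) ⊆
          {x : EuclideanSpace ℝ (Fin 2) | ∃ s t : ℝ, 0 ≤ s ∧ 0 ≤ t ∧ s + t ≤ 1 ∧ x = a + s • e1 + t • e2} := by
        apply convexHull_min
        · rintro z hz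
          rcases hz with rfl | rfl | rfl
          · exact ⟨0, 0, le_rfl, le_rfl, by norm_num, by rw [he1, he2]; module⟩
          · exact ⟨1, 0, by norm_num, le_rfl, by norm_num, by rw [he1, he2]; module⟩
          · exact ⟨0, 1, le_rfl, by norm_num, by norm_num, by rw [he1, he2]; module⟩
        · rintro p ⟨s, t, hs, ht, hst, rfl⟩ r ⟨s', t', hs', ht', hst', rfl⟩ u v hu hv huv
          refine ⟨u * s + v * s', u * t + v * t', by positivity, by positivity,
            by nlinarith, ?_⟩
          have hv1 : v = 1 - u := by linarith
          subst hv1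
          module
      exact hsub hx
    · rintro ⟨s, t, hs, ht, hst, rfl⟩
      have hmem : ∀ i : Fin 3, (![a, b, c]) i ∈ convexHull ℝ (({a, b, c} : Set (EuclideanSpace ℝ (Fin 2)))) := by
        intro i
        apply subset_convexHull
        fin_cases i <;> simp
      have hsum := (convex_convexHull ℝ (({a, b, c} : Set (EuclideanSpace ℝ (Fin 2))))).sum_mem
        (t := Finset.univ) (w := ![1 - s - t, s, t]) (z := ![a, b, c])
        (fun i _ => by fin_cases i <;> simp <;> linarith)
        (by simp [Fin.sum_univ_three]; ring)
        (fun i _ => hmem i)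
      have hrep : a + s • e1 + t • e2 =
          ∑ i : Fin 3, (![1 - s - t, s, t]) i • (![a, b, c]) i := by
        simp only [Fin.sum_univ_three, Matrix.cons_val_zero, Matrix.cons_val_one,
          Matrix.head_cons, Matrix.cons_val_two, Matrix.tail_cons]
        rw [he1, he2]; module
      rw [hrep]; exact hsum
  -- membership in a translate
  have memVadd : ∀ p q : ℝ, ∀ x : EuclideanSpace ℝ (Fin 2), x ∈ (p • e1 + q • e2) +ᵥ T ↔
      ∃ s t : ℝ, 0 ≤ s ∧ 0 ≤ t ∧ s + t ≤ 1 ∧ x = a + (p + s) • e1 + (q + t) • e2 := by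
    intro p q x
    rw [Set.mem_vadd_set_iff_neg_vadd_mem, memT]
    constructor
    · rintro ⟨s, t, hs, ht, hst, hx⟩
      refine ⟨s, t, hs, ht, hst, ?_⟩
      have : x = (p • e1 + q • e2) + (a + s • e1 + t • e2) := by
        rw [← hx]; simp [vadd_eq_add]; abel
      rw [this]; module
    · rintro ⟨s, t, hs, ht, hst, rfl⟩
      refine ⟨s, t, hs, ht, hst, ?_⟩
      simp only [vadd_eq_add]
      module
  -- no point lies in translates i, j, k when  p_i + q_j > p_k + q_k + 1
  have bad : ∀ pi qi pj qj pk qk : ℝ, pk + qk + 1 < pi + qj → ∀ z : EuclideanSpace ℝ (Fin 2),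
      z ∈ (pi • e1 + qi • e2) +ᵥ T → z ∈ (pj • e1 + qj • e2) +ᵥ T →
      z ∈ (pk • e1 + qk • e2) +ᵥ T → False := by
    intro pi qi pj qj pk qk hcond z h1 h2 h3
    rw [memVadd] at h1 h2 h3
    obtain ⟨s1, t1, hs1, ht1, hst1, hx1⟩ := h1
    obtain ⟨s2, t2, hs2, ht2, hst2, hx2⟩ := h2
    obtain ⟨s3, t3, hs3, ht3, hst3, hx3⟩ := h3
    obtain ⟨hA, hB⟩ := (ptEq _ _ _ _).1 (hx1.symm.trans hx2)
    obtain ⟨hC, hD⟩ := (ptEq _ _ _ _).1 (hx1.symm.trans hx3)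
    linarith
  -- two translates intersect when the max point is in both
  have inter : ∀ p q p' q' : ℝ,
      max p p' + max q q' ≤ min (p + q) (p' + q') + 1 →
      ((((p • e1 + q • e2) +ᵥ T)) ∩ (((p' • e1 + q' • e2) +ᵥ T))).Nonempty := by
    intro p q p' q' h
    refine ⟨a + (max p p') • e1 + (max q q') • e2, ?_, ?_⟩ <;> rw [memVadd]
    · exact ⟨max p p' - p, max q q' - q, by simp [le_max_left], by simp [le_max_left],
        by have := min_le_left (p + q) (p' + q'); linarith, by module⟩
    · exact ⟨max p p' - p', max q q' - q', by simp [le_max_right], by simp [le_max_right],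
        by have := min_le_right (p + q) (p' + q'); linarith, by module⟩
  -- the nine translation vectors
  refine ⟨{(-1/3 : ℝ) • e1 + (1/3 : ℝ) • e2, (1/3 : ℝ) • e1 + (0 : ℝ) • e2,
    (0 : ℝ) • e1 + (-1/3 : ℝ) • e2, (0 : ℝ) • e1 + (1/3 : ℝ) • e2,
    (1/3 : ℝ) • e1 + (-1/3 : ℝ) • e2, (-1/3 : ℝ) • e1 + (0 : ℝ) • e2,
    (-1/3 : ℝ) • e1 + (-1/3 : ℝ) • e2, (-1/3 : ℝ) • e1 + (2/3 : ℝ) • e2,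
    (2/3 : ℝ) • e1 + (-1/3 : ℝ) • e2}, ?_, ?_, ?_, ?_⟩
  · -- cardinality 9
    rw [Finset.card_insert_of_notMem, Finset.card_insert_of_notMem,
      Finset.card_insert_of_notMem, Finset.card_insert_of_notMem,
      Finset.card_insert_of_notMem, Finset.card_insert_of_notMem,
      Finset.card_insert_of_notMem, Finset.card_insert_of_notMem,
      Finset.card_singleton] <;>
    · simp only [Finset.mem_insert, Finset.mem_singleton, vecEq]
      norm_num
  · -- pairwise intersecting
    intro u hu w hw
    simp only [Finset.mem_insert, Finset.mem_singleton] at hu hw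
    rcases hu with rfl | rfl | rfl | rfl | rfl | rfl | rfl | rfl | rfl <;>
      rcases hw with rfl | rfl | rfl | rfl | rfl | rfl | rfl | rfl | rfl <;>
      · apply inter
        norm_num [max_def, min_def]
  · -- three piercing points
    refine ⟨{a + (1/3 : ℝ) • e1 + (1/3 : ℝ) • e2, a + (-1/3 : ℝ) • e1 + (2/3 : ℝ) • e2,
      a + (2/3 : ℝ) • e1 + (-1/3 : ℝ) • e2}, ?_, ?_⟩
    · rw [Finset.card_insert_of_notMem, Finset.card_insert_of_notMem,
        Finset.card_singleton] <;>
      · simp only [Finset.mem_insert, Finset.mem_singleton, ptEq]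
        norm_num
    · intro v hv
      simp only [Finset.mem_insert, Finset.mem_singleton] at hv
      rcases hv with rfl | rfl | rfl | rfl | rfl | rfl | rfl | rfl | rfl
      · refine ⟨a + (1/3 : ℝ) • e1 + (1/3 : ℝ) • e2, by simp, (memVadd _ _ _).2 ⟨2/3, 0, by norm_num, le_rfl, by norm_num, by module⟩⟩
      · refine ⟨a + (1/3 : ℝ) • e1 + (1/3 : ℝ) • e2, by simp, (memVadd _ _ _).2 ⟨0, 1/3, le_rfl, by norm_num, by norm_num, by module⟩⟩
      · refine ⟨a + (1/3 : ℝ) • e1 + (1/3 : ℝ) • e2, by simp, (memVadd _ _ _).2 ⟨1/3, 2/3, by norm_num, by norm_num, by norm_num, by module⟩⟩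
      · refine ⟨a + (1/3 : ℝ) • e1 + (1/3 : ℝ) • e2, by simp, (memVadd _ _ _).2 ⟨1/3, 0, by norm_num, le_rfl, by norm_num, by module⟩⟩
      · refine ⟨a + (1/3 : ℝ) • e1 + (1/3 : ℝ) • e2, by simp, (memVadd _ _ _).2 ⟨0, 2/3, le_rfl, by norm_num, by norm_num, by module⟩⟩
      · refine ⟨a + (1/3 : ℝ) • e1 + (1/3 : ℝ) • e2, by simp, (memVadd _ _ _).2 ⟨2/3, 1/3, by norm_num, by norm_num, by norm_num, by module⟩⟩
      · refine ⟨a + (-1/3 : ℝ) • e1 + (2/3 : ℝ) • e2, by simp, (memVadd _ _ _).2 ⟨0, 1, le_rfl, by norm_num, by norm_num, by module⟩⟩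
      · refine ⟨a + (-1/3 : ℝ) • e1 + (2/3 : ℝ) • e2, by simp, (memVadd _ _ _).2 ⟨0, 0, le_rfl, le_rfl, by norm_num, by module⟩⟩
      · refine ⟨a + (2/3 : ℝ) • e1 + (-1/3 : ℝ) • e2, by simp, (memVadd _ _ _).2 ⟨0, 0, le_rfl, le_rfl, by norm_num, by module⟩⟩
  · -- no two points pierce the family
    intro P hP
    by_contra hcon
    push_neg at hcon
    obtain ⟨x, y, hxy⟩ : ∃ x y : EuclideanSpace ℝ (Fin 2), ∀ p ∈ P, p = x ∨ p = y := by
      obtain h0 | h1 | h2 : P.card = 0 ∨ P.card = 1 ∨ P.card = 2 := by omega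
      · refine ⟨a, a, ?_⟩
        rw [Finset.card_eq_zero] at h0
        subst h0; intro p hp; simp at hp
      · obtain ⟨z, rfl⟩ := Finset.card_eq_one.1 h1
        exact ⟨z, z, by intro p hp; simp at hp; exact Or.inl hp⟩
      · obtain ⟨z, w, -, rfl⟩ := Finset.card_eq_two.1 h2
        refine ⟨z, w, ?_⟩
        intro p hp; simp only [Finset.mem_insert, Finset.mem_singleton] at hp; exact hp
    have hOr : ∀ v ∈ ({(-1/3 : ℝ) • e1 + (1/3 : ℝ) • e2, (1/3 : ℝ) • e1 + (0 : ℝ) • e2,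
        (0 : ℝ) • e1 + (-1/3 : ℝ) • e2, (0 : ℝ) • e1 + (1/3 : ℝ) • e2,
        (1/3 : ℝ) • e1 + (-1/3 : ℝ) • e2, (-1/3 : ℝ) • e1 + (0 : ℝ) • e2,
        (-1/3 : ℝ) • e1 + (-1/3 : ℝ) • e2, (-1/3 : ℝ) • e1 + (2/3 : ℝ) • e2,
        (2/3 : ℝ) • e1 + (-1/3 : ℝ) • e2} : Finset (EuclideanSpace ℝ (Fin 2))),
        x ∈ v +ᵥ T ∨ y ∈ v +ᵥ T := by
      intro v hv
      obtain ⟨p, hp, hpt⟩ := hcon v hv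
      rcases hxy p hp with rfl | rfl
      · exact Or.inl hpt
      · exact Or.inr hpt
    have h1 := hOr ((-1/3 : ℝ) • e1 + (1/3 : ℝ) • e2) (by simp)
    have h2 := hOr ((1/3 : ℝ) • e1 + (0 : ℝ) • e2) (by simp)
    have h3 := hOr ((0 : ℝ) • e1 + (-1/3 : ℝ) • e2) (by simp)
    have h4 := hOr ((0 : ℝ) • e1 + (1/3 : ℝ) • e2) (by simp)
    have h5 := hOr ((1/3 : ℝ) • e1 + (-1/3 : ℝ) • e2) (by simp)
    have h6 := hOr ((-1/3 : ℝ) • e1 + (0 : ℝ) • e2) (by simp)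
    have h7 := hOr ((-1/3 : ℝ) • e1 + (-1/3 : ℝ) • e2) (by simp)
    have h8 := hOr ((-1/3 : ℝ) • e1 + (2/3 : ℝ) • e2) (by simp)
    have h9 := hOr ((2/3 : ℝ) • e1 + (-1/3 : ℝ) • e2) (by simp)
    -- a point in translates 8 and 9 forbids the second point from covering 1, 5, 7
    have case89 : ∀ z w : EuclideanSpace ℝ (Fin 2),
        z ∈ ((-1/3 : ℝ) • e1 + (2/3 : ℝ) • e2) +ᵥ T →
        z ∈ ((2/3 : ℝ) • e1 + (-1/3 : ℝ) • e2) +ᵥ T →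
        (z ∈ ((-1/3 : ℝ) • e1 + (1/3 : ℝ) • e2) +ᵥ T ∨ w ∈ ((-1/3 : ℝ) • e1 + (1/3 : ℝ) • e2) +ᵥ T) →
        (z ∈ ((1/3 : ℝ) • e1 + (-1/3 : ℝ) • e2) +ᵥ T ∨ w ∈ ((1/3 : ℝ) • e1 + (-1/3 : ℝ) • e2) +ᵥ T) →
        (z ∈ ((-1/3 : ℝ) • e1 + (-1/3 : ℝ) • e2) +ᵥ T ∨ w ∈ ((-1/3 : ℝ) • e1 + (-1/3 : ℝ) • e2) +ᵥ T) →
        False := by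
      intro z w hz8 hz9 hc1 hc5 hc7
      rcases hc1 with hz1 | hw1
      · exact bad (2/3) (-1/3) (-1/3) (2/3) (-1/3) (1/3) (by norm_num) z hz9 hz8 hz1
      rcases hc5 with hz5 | hw5
      · exact bad (2/3) (-1/3) (-1/3) (2/3) (1/3) (-1/3) (by norm_num) z hz9 hz8 hz5
      rcases hc7 with hz7 | hw7
      · exact bad (2/3) (-1/3) (-1/3) (2/3) (-1/3) (-1/3) (by norm_num) z hz9 hz8 hz7
      exact bad (1/3) (-1/3) (-1/3) (1/3) (-1/3) (-1/3) (by norm_num) w hw5 hw1 hw7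
    -- a point in translates 7 and 8 forbids the second point from covering 3, 4, 9
    have case78 : ∀ z w : EuclideanSpace ℝ (Fin 2),
        z ∈ ((-1/3 : ℝ) • e1 + (-1/3 : ℝ) • e2) +ᵥ T →
        z ∈ ((-1/3 : ℝ) • e1 + (2/3 : ℝ) • e2) +ᵥ T →
        (z ∈ ((0 : ℝ) • e1 + (-1/3 : ℝ) • e2) +ᵥ T ∨ w ∈ ((0 : ℝ) • e1 + (-1/3 : ℝ) • e2) +ᵥ T) →
        (z ∈ ((0 : ℝ) • e1 + (1/3 : ℝ) • e2) +ᵥ T ∨ w ∈ ((0 : ℝ) • e1 + (1/3 : ℝ) • e2) +ᵥ T) →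
        (z ∈ ((2/3 : ℝ) • e1 + (-1/3 : ℝ) • e2) +ᵥ T ∨ w ∈ ((2/3 : ℝ) • e1 + (-1/3 : ℝ) • e2) +ᵥ T) →
        False := by
      intro z w hz7 hz8 hc3 hc4 hc9
      rcases hc3 with hz3 | hw3
      · exact bad 0 (-1/3) (-1/3) (2/3) (-1/3) (-1/3) (by norm_num) z hz3 hz8 hz7
      rcases hc4 with hz4 | hw4
      · exact bad 0 (1/3) (-1/3) (2/3) (-1/3) (-1/3) (by norm_num) z hz4 hz8 hz7
      rcases hc9 with hz9 | hw9
      · exact bad (2/3) (-1/3) (-1/3) (2/3) (-1/3) (-1/3) (by norm_num) z hz9 hz8 hz7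
      exact bad (2/3) (-1/3) 0 (1/3) 0 (-1/3) (by norm_num) w hw9 hw4 hw3
    -- a point in translates 7 and 9 forbids the second point from covering 2, 6, 8
    have case79 : ∀ z w : EuclideanSpace ℝ (Fin 2),
        z ∈ ((-1/3 : ℝ) • e1 + (-1/3 : ℝ) • e2) +ᵥ T →
        z ∈ ((2/3 : ℝ) • e1 + (-1/3 : ℝ) • e2) +ᵥ T →
        (z ∈ ((1/3 : ℝ) • e1 + (0 : ℝ) • e2) +ᵥ T ∨ w ∈ ((1/3 : ℝ) • e1 + (0 : ℝ) • e2) +ᵥ T) →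
        (z ∈ ((-1/3 : ℝ) • e1 + (0 : ℝ) • e2) +ᵥ T ∨ w ∈ ((-1/3 : ℝ) • e1 + (0 : ℝ) • e2) +ᵥ T) →
        (z ∈ ((-1/3 : ℝ) • e1 + (2/3 : ℝ) • e2) +ᵥ T ∨ w ∈ ((-1/3 : ℝ) • e1 + (2/3 : ℝ) • e2) +ᵥ T) →
        False := by
      intro z w hz7 hz9 hc2 hc6 hc8
      rcases hc2 with hz2 | hw2
      · exact bad (2/3) (-1/3) (1/3) 0 (-1/3) (-1/3) (by norm_num) z hz9 hz2 hz7
      rcases hc6 with hz6 | hw6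
      · exact bad (2/3) (-1/3) (-1/3) 0 (-1/3) (-1/3) (by norm_num) z hz9 hz6 hz7
      rcases hc8 with hz8 | hw8
      · exact bad (2/3) (-1/3) (-1/3) (2/3) (-1/3) (-1/3) (by norm_num) z hz9 hz8 hz7
      exact bad (1/3) 0 (-1/3) (2/3) (-1/3) 0 (by norm_num) w hw2 hw8 hw6
    rcases h7 with h7x | h7y <;> rcases h8 with h8x | h8y <;> rcases h9 with h9x | h9y
    · exact bad (2/3) (-1/3) (-1/3) (2/3) (-1/3) (-1/3) (by norm_num) x h9x h8x h7x
    · exact case78 x y h7x h8x h3 h4 (Or.inr h9y)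
    · exact case79 x y h7x h9x h2 h6 (Or.inr h8y)
    · exact case89 y x h8y h9y h1.symm h5.symm (Or.inr h7x)
    · exact case89 x y h8x h9x h1 h5 (Or.inr h7y)
    · exact case79 y x h7y h9y h2.symm h6.symm (Or.inr h8x)
    · exact case78 y x h7y h8y h3.symm h4.symm (Or.inr h9x)
    · exact bad (2/3) (-1/3) (-1/3) (2/3) (-1/3) (-1/3) (by norm_num) y h9y h8y h7y
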